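/- arXiv:2107.10540 — 3 statements merged into one kernel-verified Lean document; each statement's English description precedes it below -/
import Mathlib

section
/- In any involutive bisemilattice B, the set of positive elements P(B) = {a ∈ B : a ∨ ¬a = a} is closed under ∨, and for all a, b ∈ P(B) we have a ∧ b = a ∨ b. Consequently ⟨P(B), ∧⟩ and ⟨P(B), ∨⟩ are isomorphic semilattices via the identity map. -/
/-- An involutive bisemilattice: an algebra ⟨B, ∨, ∧, ¬, 0, 1⟩ satisfying I1–I8. -/
class IBSL (B : Type*) where
  sup : B → B → B
  inf : B → B → B
  neg : B → B
  zero : B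
  one : B
  I1 : ∀ x, sup x x = x
  I2 : ∀ x y, sup x y = sup y x
  I3 : ∀ x y z, sup x (sup y z) = sup (sup x y) z
  I4 : ∀ x, neg (neg x) = x
  I5 : ∀ x y, inf x y = neg (sup (neg x) (neg y))
  I6 : ∀ x y, inf x (sup (neg x) y) = inf x y
  I7 : ∀ x, sup zero x = x
  I8 : one = neg zero

namespace IBSLAux

open IBSL

variable {B : Type*} [IBSL B]

lemma neg_inj {x y : B} (h : IBSL.neg x = IBSL.neg y) : x = y := by
  rw [← I4 x, h, I4]

lemma neg_sup (x y : B) :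
    IBSL.neg (IBSL.sup x y) = IBSL.inf (IBSL.neg x) (IBSL.neg y) := by
  rw [I5, I4, I4]

lemma neg_inf (x y : B) :
    IBSL.neg (IBSL.inf x y) = IBSL.sup (IBSL.neg x) (IBSL.neg y) := by
  rw [I5, I4]

lemma inf_comm (x y : B) : IBSL.inf x y = IBSL.inf y x := by
  rw [I5, I5, I2]

lemma inf_assoc (x y z : B) :
    IBSL.inf x (IBSL.inf y z) = IBSL.inf (IBSL.inf x y) z := by
  simp only [I5, I4]
  rw [I3]

lemma inf_idem (x : B) : IBSL.inf x x = x := by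
  rw [I5, I1, I4]

/-- T2: the dual of I6. -/
lemma T2 (x y : B) :
    IBSL.sup x (IBSL.inf (IBSL.neg x) y) = IBSL.sup x y := by
  apply neg_inj
  rw [neg_sup, neg_sup, neg_inf, I4]
  have h := I6 (IBSL.neg x) (IBSL.neg y)
  rwa [I4] at h

/-- The core "flip" identity: (x ∧ ¬x) ∧ y = (x ∧ ¬x) ∧ ¬y. -/
lemma core (x y : B) :
    IBSL.inf (IBSL.inf x (IBSL.neg x)) y
      = IBSL.inf (IBSL.inf x (IBSL.neg x)) (IBSL.neg y) := by
  have hy : IBSL.inf y (IBSL.sup (IBSL.neg y) (IBSL.neg x)) = IBSL.inf y (IBSL.neg x) :=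
    I6 y (IBSL.neg x)
  have hny : IBSL.inf (IBSL.neg y) (IBSL.sup y (IBSL.neg x))
      = IBSL.inf (IBSL.neg y) (IBSL.neg x) := by
    have h := I6 (IBSL.neg y) (IBSL.neg x)
    rwa [I4] at h
  calc
    IBSL.inf (IBSL.inf x (IBSL.neg x)) y
        = IBSL.inf x (IBSL.inf (IBSL.neg x) y) := (inf_assoc _ _ _).symm
    _ = IBSL.inf x (IBSL.inf y (IBSL.neg x)) := by rw [inf_comm (IBSL.neg x) y]
    _ = IBSL.inf x (IBSL.inf y (IBSL.sup (IBSL.neg y) (IBSL.neg x))) := by rw [hy]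
    _ = IBSL.inf (IBSL.inf x y) (IBSL.sup (IBSL.neg y) (IBSL.neg x)) := inf_assoc _ _ _
    _ = IBSL.inf (IBSL.inf x (IBSL.sup (IBSL.neg x) y)) (IBSL.sup (IBSL.neg y) (IBSL.neg x)) := by
          rw [I6]
    _ = IBSL.inf x (IBSL.inf (IBSL.sup (IBSL.neg x) y) (IBSL.sup (IBSL.neg y) (IBSL.neg x))) :=
          (inf_assoc _ _ _).symm
    _ = IBSL.inf x (IBSL.inf (IBSL.sup (IBSL.neg y) (IBSL.neg x)) (IBSL.sup (IBSL.neg x) y)) := by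
          rw [inf_comm (IBSL.sup (IBSL.neg x) y)]
    _ = IBSL.inf (IBSL.inf x (IBSL.sup (IBSL.neg y) (IBSL.neg x))) (IBSL.sup (IBSL.neg x) y) :=
          inf_assoc _ _ _
    _ = IBSL.inf (IBSL.inf x (IBSL.sup (IBSL.neg x) (IBSL.neg y))) (IBSL.sup (IBSL.neg x) y) := by
          rw [I2 (IBSL.neg y) (IBSL.neg x)]
    _ = IBSL.inf (IBSL.inf x (IBSL.neg y)) (IBSL.sup (IBSL.neg x) y) := by rw [I6]
    _ = IBSL.inf x (IBSL.inf (IBSL.neg y) (IBSL.sup (IBSL.neg x) y)) := (inf_assoc _ _ _).symm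
    _ = IBSL.inf x (IBSL.inf (IBSL.neg y) (IBSL.sup y (IBSL.neg x))) := by
          rw [I2 (IBSL.neg x) y]
    _ = IBSL.inf x (IBSL.inf (IBSL.neg y) (IBSL.neg x)) := by rw [hny]
    _ = IBSL.inf x (IBSL.inf (IBSL.neg x) (IBSL.neg y)) := by
          rw [inf_comm (IBSL.neg y)]
    _ = IBSL.inf (IBSL.inf x (IBSL.neg x)) (IBSL.neg y) := inf_assoc _ _ _

/-- For a positive p, ∨-ing with y or ¬y is the same. -/
lemma pos_flip {p : B} (hp : IBSL.sup p (IBSL.neg p) = p) (y : B) :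
    IBSL.sup p y = IBSL.sup p (IBSL.neg y) := by
  have hp' : IBSL.inf (IBSL.neg p) p = IBSL.neg p := by
    have := congrArg IBSL.neg hp
    rwa [neg_sup, I4] at this
  have hc := core (IBSL.neg p) y
  rw [I4, hp'] at hc
  rw [← T2 p y, hc, T2]

/-- Positivity is closed under sup. -/
lemma sup_pos {a b : B} (ha : IBSL.sup a (IBSL.neg a) = a) (hb : IBSL.sup b (IBSL.neg b) = b) :
    IBSL.sup (IBSL.sup a b) (IBSL.neg (IBSL.sup a b)) = IBSL.sup a b := by
  calc
    IBSL.sup (IBSL.sup a b) (IBSL.neg (IBSL.sup a b))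
        = IBSL.sup (IBSL.sup b a) (IBSL.inf (IBSL.neg a) (IBSL.neg b)) := by
          rw [neg_sup, I2 a b]
    _ = IBSL.sup b (IBSL.sup a (IBSL.inf (IBSL.neg a) (IBSL.neg b))) := (I3 _ _ _).symm
    _ = IBSL.sup b (IBSL.sup a (IBSL.neg b)) := by rw [T2]
    _ = IBSL.sup b (IBSL.sup (IBSL.neg b) a) := by rw [I2 a (IBSL.neg b)]
    _ = IBSL.sup (IBSL.sup b (IBSL.neg b)) a := I3 _ _ _
    _ = IBSL.sup b a := by rw [hb]
    _ = IBSL.sup a b := I2 _ _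

/-- On positive elements, inf and sup coincide. -/
lemma inf_eq_sup_of_pos {a b : B} (ha : IBSL.sup a (IBSL.neg a) = a)
    (hb : IBSL.sup b (IBSL.neg b) = b) :
    IBSL.inf a b = IBSL.sup a b := by
  set s := IBSL.sup a b with hs
  -- ¬a ∨ b = s
  have h1 : IBSL.sup (IBSL.neg a) b = s := by
    rw [I2, ← pos_flip hb a, I2]
  -- s ∧ a = s
  have h2 : IBSL.inf s a = s := by
    have h3 : IBSL.sup (IBSL.neg s) a = s := by
      rw [I2, ← pos_flip ha s, hs, I3, I1]
    calc IBSL.inf s a = IBSL.inf s (IBSL.sup (IBSL.neg s) a) := by rw [I6]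
      _ = IBSL.inf s s := by rw [h3]
      _ = s := inf_idem s
  calc IBSL.inf a b = IBSL.inf a (IBSL.sup (IBSL.neg a) b) := by rw [I6]
    _ = IBSL.inf a s := by rw [h1]
    _ = IBSL.inf s a := inf_comm _ _
    _ = s := h2

end IBSLAux

/-- In any involutive bisemilattice, the set of positive elements
P(B) = {a : a ∨ ¬a = a} is closed under ∨, and on positive elements ∧ and ∨
coincide; hence the identity map is a semilattice isomorphism
⟨P(B), ∧⟩ ≅ ⟨P(B), ∨⟩. -/
theorem IBSL.positives_closed_and_inf_eq_sup {B : Type*} [IBSL B]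
    (P : Set B) (hP : ∀ a, a ∈ P ↔ IBSL.sup a (IBSL.neg a) = a) :
    (∀ a b, a ∈ P → b ∈ P → IBSL.sup a b ∈ P) ∧
    (∀ a b, a ∈ P → b ∈ P → IBSL.inf a b = IBSL.sup a b) := by
  constructor
  · intro a b ha hb
    rw [hP] at ha hb ⊢
    exact IBSLAux.sup_pos ha hb
  · intro a b ha hb
    rw [hP] at ha hb
    exact IBSLAux.inf_eq_sup_of_pos ha hb
end

section
/- Let P = ⟨⨆_{i∈I} A_i, operations⟩ be the Płonka sum of a semilattice direct system ⟨A_i, p_{ii'}, I⟩ of Boolean algebras with I having a least element. Then the set of positive elements of P (elements a with a ∨ a* = a, where ∨ and negation are the Płonka sum operations) is exactly {1_i : i ∈ I}, the set of top elements of the Boolean components. -/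
section Plonka

variable {I : Type*} [SemilatticeSup I] [OrderBot I]
  (A : I → Type*) [∀ i, BooleanAlgebra (A i)]
  (p : ∀ i j, i ≤ j → A i → A j)

/-- Join in the Płonka sum of the system ⟨A_i, p, I⟩: both arguments are pushed into
the component indexed by the join of their indices. -/
def psup (x y : Σ i, A i) : Σ i, A i :=
  ⟨x.1 ⊔ y.1, p x.1 (x.1 ⊔ y.1) le_sup_left x.2 ⊔ p y.1 (x.1 ⊔ y.1) le_sup_right y.2⟩

/-- Negation in the Płonka sum: complement within the component. -/
def pneg (x : Σ i, A i) : Σ i, A i := ⟨x.1, x.2ᶜ⟩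

end Plonka

theorem psup_pneg_self {I : Type*} [SemilatticeSup I] (A : I → Type*)
    [∀ i, BooleanAlgebra (A i)] (p : ∀ i j, i ≤ j → A i → A j)
    (p_compl : ∀ i j (h : i ≤ j) (a : A i), p i j h aᶜ = (p i j h a)ᶜ) (x : Σ i, A i) :
    psup A p x (pneg A x) = ⟨x.1, ⊤⟩ :=
  calc psup A p x (pneg A x)
      = ⟨x.1 ⊔ x.1, p _ _ le_sup_left x.2 ⊔ (p _ _ le_sup_right x.2)ᶜ⟩ := by
        rw [psup, pneg, p_compl]
    _ = ⟨x.1 ⊔ x.1, ⊤⟩ := by rw [sup_compl_eq_top]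
    _ = ⟨x.1, ⊤⟩ := congrArg (fun k ↦ (⟨k, ⊤⟩ : Σ i, A i)) (sup_idem x.1)

theorem Sigma.exists_eq_mk_top_iff {ι : Type*} {A : ι → Type*} [∀ i, Top (A i)]
    (x : Σ i, A i) : (∃ i, x = ⟨i, ⊤⟩) ↔ x = ⟨x.1, ⊤⟩ :=
  ⟨fun ⟨_, hx⟩ ↦ hx ▸ rfl, fun hx ↦ ⟨x.1, hx⟩⟩

theorem plonka_positive_iff_top_general {I : Type*} [SemilatticeSup I]
    (A : I → Type*) [∀ i, BooleanAlgebra (A i)]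
    (p : ∀ i j, i ≤ j → A i → A j)
    (p_compl : ∀ i j (h : i ≤ j) (a : A i), p i j h aᶜ = (p i j h a)ᶜ) :
    ∀ x : Σ i, A i, psup A p x (pneg A x) = x ↔ ∃ i : I, x = ⟨i, (⊤ : A i)⟩ := by
  intro x
  rw [psup_pneg_self A p p_compl, eq_comm, Sigma.exists_eq_mk_top_iff]

/-- in the Płonka sum of a semilattice direct system of Boolean algebras
(index semilattice with least element), the positive elements (those a with
a ∨ ¬a = a) are exactly the top elements 1_i of the Boolean components. -/
theorem plonka_positive_iff_top {I : Type*} [SemilatticeSup I] [OrderBot I]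
    (A : I → Type*) [∀ i, BooleanAlgebra (A i)]
    (p : ∀ i j, i ≤ j → A i → A j)
    (p_id : ∀ i (a : A i), p i i le_rfl a = a)
    (p_comp : ∀ i j k (h1 : i ≤ j) (h2 : j ≤ k) (a : A i),
      p j k h2 (p i j h1 a) = p i k (h1.trans h2) a)
    (p_sup : ∀ i j (h : i ≤ j) (a b : A i), p i j h (a ⊔ b) = p i j h a ⊔ p i j h b)
    (p_compl : ∀ i j (h : i ≤ j) (a : A i), p i j h aᶜ = (p i j h a)ᶜ) :
    ∀ x : Σ i, A i, psup A p x (pneg A x) = x ↔ ∃ i : I, x = ⟨i, (⊤ : A i)⟩ :=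
  plonka_positive_iff_top_general A p p_compl
end

section
/- Let P be the Płonka sum of a semilattice direct system ⟨A_i, p_{ii'}, I⟩ of Boolean algebras (I with least element). The map f : I → P(P) defined by f(i) = 1_i (the top of A_i) is a semilattice isomorphism from ⟨I, ∨⟩ onto ⟨P(P), ∨⟩, where P(P) is the set of positive elements with the Płonka sum join. -/
/-- the map f(i) = 1_i is a semilattice isomorphism from ⟨I, ∨⟩ onto the
set of positive elements of the Płonka sum, with the Płonka sum join: f is injective,
its range is exactly the set of positive elements, and f(i ∨ j) = f(i) ∨ f(j). -/
theorem plonka_index_iso_positives {I : Type*} [SemilatticeSup I] [OrderBot I]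
    (A : I → Type*) [∀ i, BooleanAlgebra (A i)]
    (p : ∀ i j, i ≤ j → A i → A j)
    (p_id : ∀ i (a : A i), p i i le_rfl a = a)
    (p_comp : ∀ i j k (h1 : i ≤ j) (h2 : j ≤ k) (a : A i),
      p j k h2 (p i j h1 a) = p i k (h1.trans h2) a)
    (p_sup : ∀ i j (h : i ≤ j) (a b : A i), p i j h (a ⊔ b) = p i j h a ⊔ p i j h b)
    (p_compl : ∀ i j (h : i ≤ j) (a : A i), p i j h aᶜ = (p i j h a)ᶜ)
    (f : I → Σ i, A i) (hf : ∀ i, f i = ⟨i, (⊤ : A i)⟩) :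
    Function.Injective f ∧
    (∀ x : Σ i, A i, psup A p x (pneg A x) = x ↔ ∃ i, f i = x) ∧
    (∀ i j : I, f (i ⊔ j) = psup A p (f i) (f j)) := by

  have ptop : ∀ i j (h : i ≤ j), p i j h (⊤ : A i) = ⊤ := by
    intro i j h
    have h1 := p_sup i j h ⊤ ⊤ᶜ
    rw [sup_compl_eq_top, p_compl] at h1
    rw [h1, sup_compl_eq_top]
  have key : ∀ (i : I) (a : A i), psup A p ⟨i, a⟩ (pneg A ⟨i, a⟩) = ⟨i, (⊤ : A i)⟩ := by
    intro i a
    show (⟨i ⊔ i, p i (i ⊔ i) le_sup_left a ⊔ p i (i ⊔ i) le_sup_right aᶜ⟩ : Σ i, A i) = _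
    have gen : ∀ j (h1 h2 : i ≤ j) (hji : j = i),
        (⟨j, p i j h1 a ⊔ p i j h2 aᶜ⟩ : Σ i, A i) = ⟨i, (⊤ : A i)⟩ := by
      intro j h1 h2 hji; subst hji
      rw [p_id, p_id, sup_compl_eq_top]
    exact gen (i ⊔ i) le_sup_left le_sup_right (sup_idem i)
  refine ⟨?_, ?_, ?_⟩
  · intro i j hij
    rw [hf, hf] at hij
    exact congrArg Sigma.fst hij
  · intro x
    constructor
    · intro hx
      obtain ⟨i, a⟩ := x
      exact ⟨i, by rw [hf, ← key i a, hx]⟩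
    · rintro ⟨i, rfl⟩
      rw [hf]
      exact key i ⊤
  · intro i j
    rw [hf, hf, hf]
    show _ = (⟨i ⊔ j, p i (i ⊔ j) le_sup_left ⊤ ⊔ p j (i ⊔ j) le_sup_right ⊤⟩ : Σ i, A i)
    rw [ptop, ptop, sup_idem]
end
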